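/- Consider the N-player game in which each peer i chooses x_i ≥ 0 and receives payoff u_i(x) = f(∑_{j=1}^N x_j) − γ·x_i − δ·∑_{j≠i} x_j (the content production game with enforced full sharing, with y_i = x_i and full downloading substituted in). Then x ∈ ℝ_+^N is a Nash equilibrium (for each i, x_i maximizes u_i over [0,∞) given x_{−i}) if and only if ∑_{j=1}^N x_j = x̃_γ. Moreover, at every Nash equilibrium the sum of the peers' payoffs equals N·(f(x̃_γ) − β·x̃_γ). -/

import Mathlib

open Filter Finset

/-- The benefit function `f` with its first and second derivatives, together with
the maximizer map `α ↦ x̂_α` (the unique `x ≥ 0` with `f'(x̂_α) = α` for `α ∈ (0, f'(0)]`). -/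
structure BenefitFun where
  f : ℝ → ℝ
  f' : ℝ → ℝ
  f'' : ℝ → ℝ
  xhat : ℝ → ℝ
  f_zero : f 0 = 0
  f_nonneg : ∀ x : ℝ, 0 ≤ x → 0 ≤ f x
  hasDeriv : ∀ x ∈ Set.Ici (0:ℝ), HasDerivWithinAt f (f' x) (Set.Ici 0) x
  hasDeriv' : ∀ x ∈ Set.Ici (0:ℝ), HasDerivWithinAt f' (f'' x) (Set.Ici 0) x
  cont_f'' : ContinuousOn f'' (Set.Ici 0)
  f'_pos : ∀ x : ℝ, 0 < x → 0 < f' x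
  f''_neg : ∀ x : ℝ, 0 < x → f'' x < 0
  f'_tendsto : Filter.Tendsto f' Filter.atTop (nhds 0)
  xhat_nonneg : ∀ α : ℝ, 0 < α → α ≤ f' 0 → 0 ≤ xhat α
  xhat_spec : ∀ α : ℝ, 0 < α → α ≤ f' 0 → f' (xhat α) = α
  xhat_unique : ∀ α : ℝ, 0 < α → α ≤ f' 0 → ∀ x : ℝ, 0 ≤ x → f' x = α → x = xhat α
  xhat_max : ∀ α : ℝ, 0 < α → α ≤ f' 0 → ∀ x : ℝ, 0 ≤ x → f x - α * x ≤ f (xhat α) - α * xhat α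

/-- `f*(α) = f(x̂_α) − α·x̂_α = sup_{x ≥ 0} (f(x) − α x)`. -/
noncomputable def BenefitFun.fstar (B : BenefitFun) (α : ℝ) : ℝ :=
  B.f (B.xhat α) - α * B.xhat α

/-- `β̃(n) = (1/n)·κ + ((n−1)/n)·(δ+σ)`. -/
noncomputable def btilde (κ δ σ : ℝ) (n : ℕ) : ℝ :=
  (1 / (n:ℝ)) * κ + (((n:ℝ) - 1) / (n:ℝ)) * (δ + σ)

/-- Peer `i`'s payoff in the content production game with enforced full sharing
(full downloading substituted in): `uᵢ(x) = f(∑ⱼ xⱼ) − γ xᵢ − δ·∑_{j≠i} xⱼ`. -/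
noncomputable def payoffFS (B : BenefitFun) (γ δ : ℝ) {N : ℕ}
    (x : Fin N → ℝ) (i : Fin N) : ℝ :=
  B.f (∑ j, x j) - γ * x i - δ * (∑ j ∈ Finset.univ.erase i, x j)

/-! The deviation gain of peer `i` depends only on the aggregate `∑ⱼ xⱼ` through
`g(y) = f(y) − γ y`, since the download cost `δ` paid on the others' content is unaffected by
`i`'s own choice. As `f` is strictly concave, `g` increases up to `x̃_γ` and decreases after it,
so no peer can profitably move the aggregate exactly when it already equals `x̃_γ`. At such a
profile the total payoff is `N f(x̃_γ) − (γ + (N − 1) δ) x̃_γ = N (f(x̃_γ) − β x̃_γ)`. -/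

open Set

theorem le_of_strictMonoOn_Icc_of_strictAntiOn_Ici {g : ℝ → ℝ} {a m : ℝ}
    (hinc : StrictMonoOn g (Icc a m)) (hdec : StrictAntiOn g (Ici m)) (ha : a ≤ m)
    {y : ℝ} (hy : a ≤ y) : g y ≤ g m := by
  rcases le_total y m with hym | hmy
  · exact hinc.monotoneOn ⟨hy, hym⟩ ⟨ha, le_rfl⟩ hym
  · exact hdec.antitoneOn self_mem_Ici hmy hmy

theorem forall_deviation_le_iff_sum_eq {ι : Type*} [Fintype ι] [Nonempty ι]
    {g : ℝ → ℝ} {m : ℝ} (hm : 0 ≤ m)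
    (hinc : StrictMonoOn g (Icc 0 m)) (hdec : StrictAntiOn g (Ici m))
    {x : ι → ℝ} (hx : ∀ i, 0 ≤ x i) :
    (∀ i, ∀ x' : ℝ, 0 ≤ x' → g (∑ j, x j - x i + x') ≤ g (∑ j, x j)) ↔ ∑ j, x j = m := by
  set S := ∑ j, x j
  have hxS : ∀ i, x i ≤ S := fun i => single_le_sum (fun j _ => hx j) (mem_univ i)
  constructor
  · intro hnash
    rcases lt_trichotomy S m with hlt | heq | hgt
    · obtain ⟨i⟩ := ‹Nonempty ι›
      have hS : 0 ≤ S := sum_nonneg fun j _ => hx j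
      have h := hnash i (m - (S - x i)) (by linarith [hx i])
      rw [add_sub_cancel] at h
      have hgain : g S < g m := hinc ⟨hS, hlt.le⟩ ⟨hm, le_rfl⟩ hlt
      exact absurd h hgain.not_ge
    · exact heq
    · obtain ⟨i, hi⟩ : ∃ i, 0 < x i := by
        by_contra! h
        exact absurd (sum_nonpos fun j _ => h j) (by linarith)
      set y := max (S - x i) m
      have hyS : y < S := max_lt (by linarith) hgt
      have h := hnash i (y - (S - x i)) (by linarith [le_max_left (S - x i) m])
      rw [add_sub_cancel] at h
      have hgain : g S < g y := hdec (mem_Ici.2 (le_max_right _ _)) (mem_Ici.2 hgt.le) hyS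
      exact absurd h hgain.not_ge
  · intro hS i x' hx'
    rw [show S = m from hS]
    exact le_of_strictMonoOn_Icc_of_strictAntiOn_Ici hinc hdec hm
      (add_nonneg (sub_nonneg.2 (hS ▸ hxS i)) hx')

namespace BenefitFun

variable (B : BenefitFun)

/-- The paper's `x̃_α`, the maximizer of `f(x) − α x` over `x ≥ 0`. -/
noncomputable def xtilde (α : ℝ) : ℝ := if α ≤ B.f' 0 then B.xhat α else 0

def netBenefit (α y : ℝ) : ℝ := B.f y - α * y

theorem hasDerivAt_f {x : ℝ} (hx : 0 < x) : HasDerivAt B.f (B.f' x) x :=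
  (B.hasDeriv x hx.le).hasDerivAt (Ici_mem_nhds hx)

theorem hasDerivAt_f' {x : ℝ} (hx : 0 < x) : HasDerivAt B.f' (B.f'' x) x :=
  (B.hasDeriv' x hx.le).hasDerivAt (Ici_mem_nhds hx)

theorem continuousOn_f : ContinuousOn B.f (Ici 0) :=
  fun x hx => (B.hasDeriv x hx).continuousWithinAt

theorem strictAntiOn_f' : StrictAntiOn B.f' (Ici 0) := by
  refine strictAntiOn_of_deriv_neg (convex_Ici 0)
    (fun x hx => (B.hasDeriv' x hx).continuousWithinAt) fun x hx => ?_
  rw [interior_Ici] at hx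
  rw [(B.hasDerivAt_f' hx).deriv]
  exact B.f''_neg x hx

variable {B} {α : ℝ}

theorem xtilde_nonneg (hα : 0 < α) : 0 ≤ B.xtilde α := by
  unfold xtilde
  split_ifs with h
  · exact B.xhat_nonneg α hα h
  · exact le_rfl

theorem f'_xtilde_le (hα : 0 < α) : B.f' (B.xtilde α) ≤ α := by
  unfold xtilde
  split_ifs with h
  · exact (B.xhat_spec α hα h).le
  · exact (not_le.1 h).le

theorem f'_xtilde_of_pos (hα : 0 < α) (h : 0 < B.xtilde α) : B.f' (B.xtilde α) = α := by
  unfold xtilde at h ⊢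
  split_ifs at h ⊢ with hle
  · exact B.xhat_spec α hα hle
  · exact absurd h (lt_irrefl 0)

theorem hasDerivAt_netBenefit {y : ℝ} (hy : 0 < y) :
    HasDerivAt (B.netBenefit α) (B.f' y - α) y :=
  (B.hasDerivAt_f hy).fun_sub (by simpa using (hasDerivAt_id y).const_mul α)

theorem continuousOn_netBenefit : ContinuousOn (B.netBenefit α) (Ici 0) :=
  B.continuousOn_f.sub (continuousOn_const.mul continuousOn_id)

theorem strictMonoOn_netBenefit (hα : 0 < α) :
    StrictMonoOn (B.netBenefit α) (Icc 0 (B.xtilde α)) := by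
  refine strictMonoOn_of_deriv_pos (convex_Icc _ _)
    (continuousOn_netBenefit.mono Icc_subset_Ici_self) fun y hy => ?_
  rw [interior_Icc] at hy
  have hpos : 0 < B.xtilde α := hy.1.trans hy.2
  have h := B.strictAntiOn_f' hy.1.le hpos.le hy.2
  rw [f'_xtilde_of_pos hα hpos] at h
  rw [(hasDerivAt_netBenefit hy.1).deriv]
  linarith

theorem strictAntiOn_netBenefit (hα : 0 < α) :
    StrictAntiOn (B.netBenefit α) (Ici (B.xtilde α)) := by
  have h0 := xtilde_nonneg (B := B) hα
  refine strictAntiOn_of_deriv_neg (convex_Ici _)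
    (continuousOn_netBenefit.mono (Ici_subset_Ici.2 h0)) fun y hy => ?_
  rw [interior_Ici] at hy
  have h := B.strictAntiOn_f' (mem_Ici.2 h0) (mem_Ici.2 (h0.trans hy.le)) hy
  rw [(hasDerivAt_netBenefit (h0.trans_lt hy)).deriv]
  linarith [f'_xtilde_le (B := B) hα]

end BenefitFun

section payoffFS

variable (B : BenefitFun) (γ δ : ℝ) {N : ℕ} (x : Fin N → ℝ)

theorem payoffFS_eq (i : Fin N) :
    payoffFS B γ δ x i = B.f (∑ j, x j) - γ * x i - δ * (∑ j, x j - x i) := by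
  rw [payoffFS, sum_erase_eq_sub (mem_univ i)]

theorem payoffFS_update_self_le_iff (i : Fin N) (x' : ℝ) :
    payoffFS B γ δ (Function.update x i x') i ≤ payoffFS B γ δ x i
      ↔ B.netBenefit γ (∑ j, x j - x i + x') ≤ B.netBenefit γ (∑ j, x j) := by
  have hsum : ∑ j, Function.update x i x' j = ∑ j, x j - x i + x' := by
    rw [sum_update_of_mem (mem_univ i), ← sum_erase_eq_sub (mem_univ i), add_comm]
    simp [sdiff_singleton_eq_erase]
  have hdiff : payoffFS B γ δ (Function.update x i x') i - payoffFS B γ δ x i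
      = B.netBenefit γ (∑ j, x j - x i + x') - B.netBenefit γ (∑ j, x j) := by
    rw [payoffFS_eq, payoffFS_eq, hsum, Function.update_self, BenefitFun.netBenefit,
      BenefitFun.netBenefit]
    ring
  rw [← sub_nonpos, hdiff, sub_nonpos]

theorem sum_payoffFS :
    ∑ i, payoffFS B γ δ x i = N * B.f (∑ j, x j) - (γ + (N - 1) * δ) * ∑ j, x j := by
  simp only [payoffFS_eq, sum_sub_distrib, sum_const, card_univ, Fintype.card_fin, nsmul_eq_mul,
    ← mul_sum]
  ring

end payoffFS

theorem stmt13_general (B : BenefitFun) (N : ℕ) (hN : 2 ≤ N)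
    (κ δ σ : ℝ) (hκ : 0 < κ) (hσ : 0 < σ)
    (β : ℝ) (hβ : β = (1 / (N:ℝ)) * κ + (((N:ℝ) - 1) / (N:ℝ)) * (δ + σ))
    (γ : ℝ) (hγ : γ = κ + ((N:ℝ) - 1) * σ)
    (xt : ℝ) (hxt : xt = if γ ≤ B.f' 0 then B.xhat γ else 0) :
    (∀ x : Fin N → ℝ, (∀ j, 0 ≤ x j) →
      ((∀ i : Fin N, ∀ x' : ℝ, 0 ≤ x' →
          payoffFS B γ δ (Function.update x i x') i ≤ payoffFS B γ δ x i)
        ↔ (∑ j, x j) = xt))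
    ∧ (∀ x : Fin N → ℝ, (∀ j, 0 ≤ x j) →
        (∀ i : Fin N, ∀ x' : ℝ, 0 ≤ x' →
          payoffFS B γ δ (Function.update x i x') i ≤ payoffFS B γ δ x i) →
        (∑ i, payoffFS B γ δ x i) = (N:ℝ) * (B.f xt - β * xt)) := by
  have hN' : (2:ℝ) ≤ N := by exact_mod_cast hN
  have hγ0 : 0 < γ := by rw [hγ]; nlinarith
  have : Nonempty (Fin N) := ⟨⟨0, by omega⟩⟩
  have hxt' : xt = B.xtilde γ := hxt
  have nash_iff : ∀ x : Fin N → ℝ, (∀ j, 0 ≤ x j) →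
      ((∀ i : Fin N, ∀ x' : ℝ, 0 ≤ x' →
          payoffFS B γ δ (Function.update x i x') i ≤ payoffFS B γ δ x i)
        ↔ (∑ j, x j) = xt) := by
    intro x hx
    simp_rw [payoffFS_update_self_le_iff, hxt']
    exact forall_deviation_le_iff_sum_eq (BenefitFun.xtilde_nonneg hγ0)
      (BenefitFun.strictMonoOn_netBenefit hγ0) (BenefitFun.strictAntiOn_netBenefit hγ0) hx
  refine ⟨nash_iff, fun x hx hnash => ?_⟩
  rw [sum_payoffFS, (nash_iff x hx).1 hnash, hβ, hγ]
  field_simp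
  ring

theorem stmt13 (B : BenefitFun) (N : ℕ) (hN : 2 ≤ N)
    (κ δ σ : ℝ) (hκ : 0 < κ) (hδ : 0 < δ) (hσ : 0 < σ)
    (hcost : δ + σ < κ) (hκf : κ < B.f' 0)
    (β : ℝ) (hβ : β = (1 / (N:ℝ)) * κ + (((N:ℝ) - 1) / (N:ℝ)) * (δ + σ))
    (γ : ℝ) (hγ : γ = κ + ((N:ℝ) - 1) * σ)
    (xt : ℝ) (hxt : xt = if γ ≤ B.f' 0 then B.xhat γ else 0) :
    (∀ x : Fin N → ℝ, (∀ j, 0 ≤ x j) →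
      ((∀ i : Fin N, ∀ x' : ℝ, 0 ≤ x' →
          payoffFS B γ δ (Function.update x i x') i ≤ payoffFS B γ δ x i)
        ↔ (∑ j, x j) = xt))
    ∧ (∀ x : Fin N → ℝ, (∀ j, 0 ≤ x j) →
        (∀ i : Fin N, ∀ x' : ℝ, 0 ≤ x' →
          payoffFS B γ δ (Function.update x i x') i ≤ payoffFS B γ δ x i) →
        (∑ i, payoffFS B γ δ x i) = (N:ℝ) * (B.f xt - β * xt)) :=
  stmt13_general B N hN κ δ σ hκ hσ β hβ γ hγ xt hxt
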